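/- arXiv:math/0602416 — 4 statements merged into one kernel-verified Lean document; each statement's English description precedes it below -/
import Mathlib

section
/- For 0≤i≤d one has η*_i(A*) E_0 E*_0 = (ϕ_d ϕ_{d−1} ⋯ ϕ_{d−i+1} / η_d(θ_0)) · η_{d−i}(A) E*_0, where η_d(θ_0) = (θ_0−θ_d)(θ_0−θ_{d−1})⋯(θ_0−θ_1) is nonzero since θ_0,…,θ_d are mutually distinct. -/
open Polynomial Matrix Finset

noncomputable section

/-- The lower bidiagonal matrix with diagonal entries `θ 0, …, θ d` and
subdiagonal entries `1`. -/
def matA {K : Type*} [Field K] (d : ℕ) (θ : ℕ → K) :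
    Matrix (Fin (d + 1)) (Fin (d + 1)) K :=
  Matrix.of fun i j =>
    if (i : ℕ) = (j : ℕ) then θ (i : ℕ)
    else if (i : ℕ) = (j : ℕ) + 1 then 1 else 0

/-- The upper bidiagonal matrix with diagonal entries `θs 0, …, θs d` and
superdiagonal entries `φ 1, …, φ d` (the `(i-1,i)`-entry is `φ i`). -/
def matAs {K : Type*} [Field K] (d : ℕ) (θs φ : ℕ → K) :
    Matrix (Fin (d + 1)) (Fin (d + 1)) K :=
  Matrix.of fun i j =>
    if (i : ℕ) = (j : ℕ) then θs (i : ℕ)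
    else if (j : ℕ) = (i : ℕ) + 1 then φ (j : ℕ) else 0

/-- The primitive idempotent `E_i = ∏_{j ≠ i} (M - θ_j I)/(θ_i - θ_j)` of a matrix `M`
with eigenvalues `θ 0, …, θ d`. -/
def primIdem {K : Type*} [Field K] (d : ℕ) (θ : ℕ → K)
    (M : Matrix (Fin (d + 1)) (Fin (d + 1)) K) (i : ℕ) :
    Matrix (Fin (d + 1)) (Fin (d + 1)) K :=
  Polynomial.aeval M (∏ j ∈ (Finset.range (d + 1)).erase i,
    (Polynomial.C ((θ i - θ j)⁻¹) * (Polynomial.X - Polynomial.C (θ j))))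

/-- `τ_i(λ) = (λ - θ_0)(λ - θ_1)⋯(λ - θ_{i-1})`. -/
def tauPoly {K : Type*} [Field K] (θ : ℕ → K) (i : ℕ) : Polynomial K :=
  ∏ k ∈ Finset.range i, (Polynomial.X - Polynomial.C (θ k))

/-- `η_i(λ) = (λ - θ_d)(λ - θ_{d-1})⋯(λ - θ_{d-i+1})`. -/
def etaPoly {K : Type*} [Field K] (d : ℕ) (θ : ℕ → K) (i : ℕ) : Polynomial K :=
  ∏ k ∈ Finset.range i, (Polynomial.X - Polynomial.C (θ (d - k)))

/-!
Both sides are compared on the basis `v_0, …, v_d`. The idempotent `E*_0` sends every `v_j` to a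
multiple of `v_0`: the factors `(A* - θ*_1 I) ⋯ (A* - θ*_j I)` of `E*_0` lower `v_j` to a multiple
of `v_0`, and the remaining factors act on the eigenvector `v_0` by scalars. On `v_0` the identity
is a computation along the two ladders: `E_0 = η_d(θ_0)⁻¹ η_d(A)` and `η_m(A) v_0 = v_m`, while
`η*_i(A*) v_d = ϕ_d ⋯ ϕ_{d-i+1} v_{d-i}`.
-/

theorem Finset.prod_range_tsub_eq_prod_Icc {M : Type*} [CommMonoid M] (f : ℕ → M) {d i : ℕ}
    (hi : i ≤ d) : ∏ k ∈ range i, f (d - k) = ∏ k ∈ Icc (d - i + 1) d, f k := by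
  rw [range_eq_Ico, prod_Ico_reflect f 0 (by omega)]
  congr 1
  ext k
  simp only [mem_Ico, mem_Icc]
  omega

section Ladder

variable {R n : Type*} [CommRing R] [Fintype n] [DecidableEq n]

theorem aeval_X_sub_C_mulVec (M : Matrix n n R) (c : R) (x : n → R) :
    aeval M (X - C c) *ᵥ x = M *ᵥ x - c • x := by
  simp [sub_mulVec, Algebra.algebraMap_eq_smul_one, smul_mulVec]

theorem aeval_prod_X_sub_C_mulVec_of_ladder {M : Matrix n n R} {c a : ℕ → R} {w : ℕ → n → R}
    {m : ℕ} (hw : ∀ k < m, M *ᵥ w k - c k • w k = a k • w (k + 1)) :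
    aeval M (∏ k ∈ range m, (X - C (c k))) *ᵥ w 0 = (∏ k ∈ range m, a k) • w m := by
  induction m with
  | zero => simp
  | succ m ih =>
    rw [prod_range_succ, mul_comm, map_mul, ← mulVec_mulVec, ih fun k hk => hw k (by omega),
      mulVec_smul, aeval_X_sub_C_mulVec, hw m (by omega), smul_smul, prod_range_succ]

end Ladder

section EtaPolyAction

variable {K n : Type*} [Field K] [Fintype n] [DecidableEq n] {M : Matrix n n K} {d : ℕ}

theorem aeval_etaPoly_mulVec_zero {θ : ℕ → K} {v : ℕ → n → K}
    (hv : ∀ i < d, M *ᵥ v i - θ (d - i) • v i = v (i + 1)) {m : ℕ} (hm : m ≤ d) :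
    aeval M (etaPoly d θ m) *ᵥ v 0 = v m := by
  simpa [etaPoly] using aeval_prod_X_sub_C_mulVec_of_ladder (a := fun _ => 1)
    fun k hk => (hv k (by omega)).trans (one_smul K _).symm

theorem aeval_etaPoly_mulVec_last {θs ϕ : ℕ → K} {v : ℕ → n → K}
    (hv : ∀ i, 1 ≤ i → i ≤ d → M *ᵥ v i - θs i • v i = ϕ i • v (i - 1)) {i : ℕ} (hi : i ≤ d) :
    aeval M (etaPoly d θs i) *ᵥ v d = (∏ k ∈ Icc (d - i + 1) d, ϕ k) • v (d - i) := by
  have hladder : ∀ k < i, M *ᵥ v (d - k) - θs (d - k) • v (d - k) = ϕ (d - k) • v (d - (k + 1)) :=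
    fun k hk => by rw [hv (d - k) (by omega) (by omega), Nat.sub_sub]
  rw [← prod_range_tsub_eq_prod_Icc _ hi]
  exact aeval_prod_X_sub_C_mulVec_of_ladder (w := fun k => v (d - k)) hladder

theorem exists_aeval_etaPoly_mulVec_eq_smul {θs ϕ : ℕ → K} {v : ℕ → n → K}
    (hv : ∀ i, 1 ≤ i → i ≤ d → M *ᵥ v i - θs i • v i = ϕ i • v (i - 1))
    (hv₀ : M *ᵥ v 0 - θs 0 • v 0 = 0) {j : ℕ} (hj : j ≤ d) :
    ∃ c : K, aeval M (etaPoly d θs d) *ᵥ v j = c • v 0 := by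
  have hlower : ∀ k < j, M *ᵥ v (j - k) - θs (d - (d - j + k)) • v (j - k)
      = ϕ (j - k) • v (j - (k + 1)) := fun k hk => by
    rw [show d - (d - j + k) = j - k by omega, hv (j - k) (by omega) (by omega), Nat.sub_sub]
  have heigen : ∀ k < d - j, M *ᵥ v 0 - θs (d - k) • v 0 = (θs 0 - θs (d - k)) • v 0 :=
    fun k _ => by rw [sub_smul, ← sub_eq_zero.mp hv₀]
  refine ⟨(∏ k ∈ range (d - j), (θs 0 - θs (d - k))) * ∏ k ∈ range j, ϕ (j - k), ?_⟩
  have hvj := aeval_prod_X_sub_C_mulVec_of_ladder (w := fun k => v (j - k)) hlower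
  have hv0 := aeval_prod_X_sub_C_mulVec_of_ladder (w := fun _ => v 0) heigen
  rw [Nat.sub_zero, tsub_self] at hvj
  rw [etaPoly, ← Nat.sub_add_cancel hj, prod_range_add, map_mul, ← mulVec_mulVec,
    Nat.sub_add_cancel hj, hvj, mulVec_smul, hv0, smul_smul, mul_comm]

end EtaPolyAction

theorem primIdem_zero_eq_smul_aeval_etaPoly {K : Type*} [Field K] (d : ℕ) (θ : ℕ → K)
    (M : Matrix (Fin (d + 1)) (Fin (d + 1)) K) :
    primIdem d θ M 0 = ((etaPoly d θ d).eval (θ 0))⁻¹ • aeval M (etaPoly d θ d) := by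
  have hIcc : (range (d + 1)).erase 0 = Icc 1 d := by
    ext k; simp only [mem_erase, mem_range, mem_Icc]; omega
  have hpoly : etaPoly d θ d = ∏ k ∈ Icc 1 d, (X - C (θ k)) := by
    rw [etaPoly, prod_range_tsub_eq_prod_Icc (fun k => X - C (θ k)) le_rfl, Nat.sub_self]
  rw [primIdem, hIcc, prod_mul_distrib, ← map_prod, map_mul, aeval_C, ← Algebra.smul_def, hpoly,
    eval_prod, ← prod_inv_distrib]
  simp only [eval_sub, eval_X, eval_C]

theorem etas_EZero_EsZero_general {K : Type*} [Field K] (d : ℕ) (θ θs φ ϕ : ℕ → K)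
    (v : ℕ → Fin (d + 1) → K)
    (hvsp : Submodule.span K (Set.range fun i : Fin (d + 1) => v (i : ℕ)) = ⊤)
    (hv1 : ∀ i < d, (matA d θ).mulVec (v i) - θ (d - i) • v i = v (i + 1))
    (hv3 : ∀ i, 1 ≤ i → i ≤ d →
      (matAs d θs φ).mulVec (v i) - θs i • v i = ϕ i • v (i - 1))
    (hv4 : (matAs d θs φ).mulVec (v 0) - θs 0 • v 0 = 0) :
    ∀ i ≤ d,
      Polynomial.aeval (matAs d θs φ) (etaPoly d θs (i)) * primIdem d θ (matA d θ) 0 * primIdem d θs (matAs d θs φ) 0 = ((∏ k ∈ Finset.Icc (d - i + 1) (d), ϕ k) / (etaPoly d θ d).eval (θ 0)) • (Polynomial.aeval (matA d θ) (etaPoly d θ (d - i)) * primIdem d θs (matAs d θs φ) 0) := by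
  intro i hi
  apply Matrix.toLin'.injective
  refine LinearMap.ext_on hvsp ?_
  rintro _ ⟨j, rfl⟩
  obtain ⟨c, hc⟩ := exists_aeval_etaPoly_mulVec_eq_smul hv3 hv4 (Nat.lt_succ_iff.mp j.isLt)
  simp only [toLin'_apply, smul_mulVec, ← mulVec_mulVec, primIdem_zero_eq_smul_aeval_etaPoly,
    hc, mulVec_smul, aeval_etaPoly_mulVec_zero hv1 le_rfl, aeval_etaPoly_mulVec_last hv3 hi,
    aeval_etaPoly_mulVec_zero hv1 (Nat.sub_le d i), smul_smul]
  congr 1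
  ring

theorem etas_EZero_EsZero {K : Type*} [Field K] (d : ℕ) (θ θs φ ϕ : ℕ → K)
    (hθ : ∀ i ≤ d, ∀ j ≤ d, θ i = θ j → i = j)
    (hθs : ∀ i ≤ d, ∀ j ≤ d, θs i = θs j → i = j)
    (hφ : ∀ i, 1 ≤ i → i ≤ d → φ i ≠ 0)
    (hE0 : ∀ i ≤ d, ∀ j ≤ d, 1 < |(i : ℤ) - (j : ℤ)| →
      primIdem d θ (matA d θ) i * matAs d θs φ * primIdem d θ (matA d θ) j = 0)
    (hE1 : ∀ i ≤ d, ∀ j ≤ d, |(i : ℤ) - (j : ℤ)| = 1 →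
      primIdem d θ (matA d θ) i * matAs d θs φ * primIdem d θ (matA d θ) j ≠ 0)
    (hEs0 : ∀ i ≤ d, ∀ j ≤ d, 1 < |(i : ℤ) - (j : ℤ)| →
      primIdem d θs (matAs d θs φ) i * matA d θ * primIdem d θs (matAs d θs φ) j = 0)
    (hEs1 : ∀ i ≤ d, ∀ j ≤ d, |(i : ℤ) - (j : ℤ)| = 1 →
      primIdem d θs (matAs d θs φ) i * matA d θ * primIdem d θs (matAs d θs φ) j ≠ 0)
    (hϕ : ∀ i, 1 ≤ i → i ≤ d → ϕ i ≠ 0)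
    (v : ℕ → Fin (d + 1) → K)
    (hvli : LinearIndependent K fun i : Fin (d + 1) => v (i : ℕ))
    (hvsp : Submodule.span K (Set.range fun i : Fin (d + 1) => v (i : ℕ)) = ⊤)
    (hv1 : ∀ i < d, (matA d θ).mulVec (v i) - θ (d - i) • v i = v (i + 1))
    (hv2 : (matA d θ).mulVec (v d) - θ 0 • v d = 0)
    (hv3 : ∀ i, 1 ≤ i → i ≤ d →
      (matAs d θs φ).mulVec (v i) - θs i • v i = ϕ i • v (i - 1))
    (hv4 : (matAs d θs φ).mulVec (v 0) - θs 0 • v 0 = 0) :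
    ∀ i ≤ d,
      Polynomial.aeval (matAs d θs φ) (etaPoly d θs (i)) * primIdem d θ (matA d θ) 0 * primIdem d θs (matAs d θs φ) 0 = ((∏ k ∈ Finset.Icc (d - i + 1) (d), ϕ k) / (etaPoly d θ d).eval (θ 0)) • (Polynomial.aeval (matA d θ) (etaPoly d θ (d - i)) * primIdem d θs (matAs d θs φ) 0) :=
  etas_EZero_EsZero_general d θ θs φ ϕ v hvsp hv1 hv3 hv4
end
end

section
/- For 0≤i≤d one has η*_i(A*) E_d E*_0 = (φ_d φ_{d−1} ⋯ φ_{d−i+1} / τ_d(θ_d)) · τ_{d−i}(A) E*_0, where τ_d(θ_d) = (θ_d−θ_0)(θ_d−θ_1)⋯(θ_d−θ_{d−1}) is nonzero since θ_0,…,θ_d are mutually distinct. -/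
open Polynomial Matrix Finset

noncomputable section

/-!
The vector `E*_0 v` lies in the `θ*_0`-eigenspace of the upper triangular matrix `A*`, which is
spanned by the first standard basis vector `e_0`; so `E*_0` vanishes off its first row, and both
sides of the identity are determined by their action on `e_0`. That action is explicit: `A - θ_k`
shifts `e_k` to `e_{k+1}`, so `τ_k(A) e_0 = e_k` and `E_d e_0 = τ_d(θ_d)⁻¹ e_d`, while
`A* - θ*_k` shifts `e_k` to `φ_k e_{k-1}`, so `η*_i(A*) e_d = φ_d ⋯ φ_{d-i+1} e_{d-i}`.
-/

namespace Matrix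

variable {R : Type*}

theorem IsUpperTriangular.row_eq_zero_of_mul_eq_smul [Ring R] [NoZeroDivisors R]
    {ι κ : Type*} [Fintype ι] [LinearOrder ι] {M : Matrix ι ι R} {Z : Matrix ι κ R} {μ : R}
    (hM : M.IsUpperTriangular) (hZ : M * Z = μ • Z) (i : ι) (hi : ∀ j, i ≤ j → M j j ≠ μ) :
    Z i = 0 := by
  induction i using WellFoundedGT.induction with
  | _ i ih =>
  ext c
  have hrow := congr_fun (congr_fun hZ i) c
  rw [mul_apply, Finset.sum_eq_single i ?_ (by simp)] at hrow
  · have hcancel : (M i i - μ) * Z i c = 0 := by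
      rw [sub_mul, hrow, smul_apply, smul_eq_mul, sub_self]
    exact (mul_eq_zero.1 hcancel).resolve_left (sub_ne_zero.2 (hi i le_rfl))
  · intro j _ hji
    rcases lt_or_gt_of_ne hji with hlt | hgt
    · rw [hM hlt, zero_mul]
    · simp [ih j hgt fun k hk => hi k (hgt.le.trans hk)]

theorem mul_eq_mul_of_mulVec_single_eq [Semiring R] {m n κ : Type*} [Fintype n] [DecidableEq n]
    {M N : Matrix m n R} {Z : Matrix n κ R} (i₀ : n) (hZ : ∀ i ≠ i₀, Z i = 0)
    (h : M *ᵥ Pi.single i₀ 1 = N *ᵥ Pi.single i₀ 1) : M * Z = N * Z := by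
  ext r c
  have hcol := congr_fun h r
  simp only [mulVec_single_one, col_apply] at hcol
  have hsum (P : Matrix m n R) : (P * Z) r c = P r i₀ * Z i₀ c :=
    Finset.sum_eq_single i₀ (fun i _ hi => by simp [hZ i hi]) (by simp)
  rw [hsum, hsum, hcol]

theorem aeval_X_sub_C [CommRing R] {n : Type*} [Fintype n] [DecidableEq n] (M : Matrix n n R)
    (c : R) : aeval M (X - C c) = M - c • 1 := by
  simp [Algebra.algebraMap_eq_smul_one]

end Matrix

section

variable {K : Type*} [Field K]

theorem mul_primIdem_eq_smul {d : ℕ} {θ : ℕ → K} {M : Matrix (Fin (d + 1)) (Fin (d + 1)) K}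
    (hM : M.charpoly = ∏ j ∈ range (d + 1), (X - C (θ j))) {i : ℕ} (hi : i ≤ d) :
    M * primIdem d θ M i = θ i • primIdem d θ M i := by
  have hchar : (X - C (θ i)) * ∏ j ∈ (range (d + 1)).erase i, C ((θ i - θ j)⁻¹) * (X - C (θ j))
      = C (∏ j ∈ (range (d + 1)).erase i, (θ i - θ j)⁻¹) * M.charpoly := by
    rw [prod_mul_distrib, ← map_prod, hM,
      ← mul_prod_erase (range (d + 1)) _ (mem_range.2 (Nat.lt_succ_of_le hi))]
    ring
  have hker : (M - θ i • 1) * primIdem d θ M i = 0 := by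
    rw [← Matrix.aeval_X_sub_C, primIdem, ← map_mul, hchar, map_mul, aeval_self_charpoly, mul_zero]
  rwa [sub_mul, smul_mul_assoc, one_mul, sub_eq_zero] at hker

theorem primIdem_last (d : ℕ) (θ : ℕ → K) (M : Matrix (Fin (d + 1)) (Fin (d + 1)) K) :
    primIdem d θ M d = ((tauPoly θ d).eval (θ d))⁻¹ • aeval M (tauPoly θ d) := by
  have herase : (range (d + 1)).erase d = range d := by
    rw [range_add_one, erase_insert notMem_range_self]
  rw [primIdem, herase, prod_mul_distrib, ← map_prod, map_mul, aeval_C, ← tauPoly,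
    Algebra.algebraMap_eq_smul_one, smul_mul_assoc, one_mul, tauPoly, eval_prod,
    ← prod_inv_distrib]
  simp

/-- The standard basis vector `e_k` of `K^{d+1}`, with `e_k = 0` for `k > d` so that the shift
identities below need no side condition at the top end. -/
def stdVec (d k : ℕ) : Fin (d + 1) → K := fun i => if (i : ℕ) = k then 1 else 0

theorem stdVec_eq_single {d k : ℕ} (hk : k < d + 1) :
    stdVec (K := K) d k = Pi.single ⟨k, hk⟩ 1 := by
  ext i
  simp [stdVec, Pi.single_apply, Fin.ext_iff]

theorem stdVec_eq_zero {d k : ℕ} (hk : d < k) : stdVec (K := K) d k = 0 := by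
  ext i
  simp only [stdVec, Pi.zero_apply, ite_eq_right_iff, one_ne_zero, imp_false]
  omega

theorem matA_sub_smul_one_mulVec_stdVec (d : ℕ) (θ : ℕ → K) (k : ℕ) :
    (matA d θ - θ k • 1) *ᵥ stdVec d k = stdVec d (k + 1) := by
  rcases lt_or_ge d k with hk | hk
  · rw [stdVec_eq_zero hk, stdVec_eq_zero (by omega), mulVec_zero]
  rw [stdVec_eq_single (Nat.lt_succ_of_le hk), mulVec_single_one]
  ext i
  simp only [col_apply, Matrix.sub_apply, Matrix.smul_apply, one_apply, matA, of_apply, stdVec,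
    Fin.ext_iff, smul_eq_mul]
  split_ifs <;> first | omega | simp_all

theorem matAs_sub_smul_one_mulVec_stdVec (d : ℕ) (θs φ : ℕ → K) {k : ℕ} (hk : k + 1 ≤ d) :
    (matAs d θs φ - θs (k + 1) • 1) *ᵥ stdVec d (k + 1) = φ (k + 1) • stdVec d k := by
  rw [stdVec_eq_single (Nat.lt_succ_of_le hk), mulVec_single_one]
  ext i
  simp only [col_apply, Matrix.sub_apply, Matrix.smul_apply, Pi.smul_apply, one_apply, matAs,
    of_apply, stdVec, Fin.ext_iff, smul_eq_mul]
  split_ifs <;> first | omega | simp_all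

theorem aeval_tauPoly_mulVec_stdVec_zero (d : ℕ) (θ : ℕ → K) (k : ℕ) :
    aeval (matA d θ) (tauPoly θ k) *ᵥ stdVec d 0 = stdVec d k := by
  induction k with
  | zero => rw [tauPoly, prod_range_zero, map_one, one_mulVec]
  | succ k ih =>
    rw [tauPoly, prod_range_succ, ← tauPoly, mul_comm, map_mul, ← mulVec_mulVec, ih,
      Matrix.aeval_X_sub_C, matA_sub_smul_one_mulVec_stdVec]

theorem aeval_etaPoly_mulVec_stdVec_last (d : ℕ) (θs φ : ℕ → K) {i : ℕ} (hi : i ≤ d) :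
    aeval (matAs d θs φ) (etaPoly d θs i) *ᵥ stdVec d d
      = (∏ k ∈ Icc (d - i + 1) d, φ k) • stdVec d (d - i) := by
  induction i with
  | zero => simp [etaPoly]
  | succ i ih =>
    have hk : d - i = d - (i + 1) + 1 := by omega
    rw [etaPoly, prod_range_succ, ← etaPoly, mul_comm, map_mul, ← mulVec_mulVec, ih (by omega),
      mulVec_smul, Matrix.aeval_X_sub_C, hk, matAs_sub_smul_one_mulVec_stdVec d θs φ (by omega), ← hk,
      smul_smul, ← insert_Icc_add_one_left_eq_Icc (Nat.sub_le d i), prod_insert (by simp), mul_comm]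

theorem matAs_isUpperTriangular (d : ℕ) (θs φ : ℕ → K) : (matAs d θs φ).IsUpperTriangular := by
  intro i j hji
  have hlt : (j : ℕ) < i := hji
  have hne : (i : ℕ) ≠ j := by omega
  have hns : (j : ℕ) ≠ i + 1 := by omega
  simp [matAs, hne, hns]

theorem charpoly_matAs (d : ℕ) (θs φ : ℕ → K) :
    (matAs d θs φ).charpoly = ∏ j ∈ range (d + 1), (X - C (θs j)) := by
  rw [charpoly_of_isUpperTriangular _ (matAs_isUpperTriangular d θs φ),
    ← Fin.prod_univ_eq_prod_range (fun j => X - C (θs j))]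
  simp [matAs]

theorem primIdem_matAs_zero_row_eq_zero {d : ℕ} {θs : ℕ → K} (φ : ℕ → K)
    (hθs : ∀ i ≤ d, ∀ j ≤ d, θs i = θs j → i = j) {m : Fin (d + 1)} (hm : m ≠ 0) :
    primIdem d θs (matAs d θs φ) 0 m = 0 := by
  refine (matAs_isUpperTriangular d θs φ).row_eq_zero_of_mul_eq_smul
    (mul_primIdem_eq_smul (charpoly_matAs d θs φ) (Nat.zero_le d)) m fun j hj hθ => ?_
  have hj0 : (j : ℕ) ≠ 0 := by
    have := Fin.lt_def.1 ((Fin.pos_iff_ne_zero.2 hm).trans_le hj)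
    omega
  simp only [matAs, of_apply, if_true] at hθ
  exact hj0 (hθs j (Nat.le_of_lt_succ j.isLt) 0 (Nat.zero_le d) hθ)

end

theorem etas_ED_EsZero_general {K : Type*} [Field K] (d : ℕ) (θ θs φ : ℕ → K)
    (hθs : ∀ i ≤ d, ∀ j ≤ d, θs i = θs j → i = j) :
    ∀ i ≤ d,
      Polynomial.aeval (matAs d θs φ) (etaPoly d θs (i)) * primIdem d θ (matA d θ) d * primIdem d θs (matAs d θs φ) 0 = ((∏ k ∈ Finset.Icc (d - i + 1) (d), φ k) / (tauPoly θ d).eval (θ d)) • (Polynomial.aeval (matA d θ) (tauPoly θ (d - i)) * primIdem d θs (matAs d θs φ) 0) := by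
  intro i hi
  rw [← smul_mul]
  refine mul_eq_mul_of_mulVec_single_eq 0
    (fun _ hm => primIdem_matAs_zero_row_eq_zero φ hθs hm) ?_
  have hstd : stdVec (K := K) d 0 = Pi.single 0 1 := stdVec_eq_single d.succ_pos
  rw [← hstd, ← mulVec_mulVec, primIdem_last, smul_mulVec, aeval_tauPoly_mulVec_stdVec_zero,
    mulVec_smul, aeval_etaPoly_mulVec_stdVec_last d θs φ hi, smul_mulVec,
    aeval_tauPoly_mulVec_stdVec_zero, smul_smul, div_eq_mul_inv, mul_comm]

theorem etas_ED_EsZero {K : Type*} [Field K] (d : ℕ) (θ θs φ : ℕ → K)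
    (hθ : ∀ i ≤ d, ∀ j ≤ d, θ i = θ j → i = j)
    (hθs : ∀ i ≤ d, ∀ j ≤ d, θs i = θs j → i = j)
    (hφ : ∀ i, 1 ≤ i → i ≤ d → φ i ≠ 0)
    (hE0 : ∀ i ≤ d, ∀ j ≤ d, 1 < |(i : ℤ) - (j : ℤ)| →
      primIdem d θ (matA d θ) i * matAs d θs φ * primIdem d θ (matA d θ) j = 0)
    (hE1 : ∀ i ≤ d, ∀ j ≤ d, |(i : ℤ) - (j : ℤ)| = 1 →
      primIdem d θ (matA d θ) i * matAs d θs φ * primIdem d θ (matA d θ) j ≠ 0)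
    (hEs0 : ∀ i ≤ d, ∀ j ≤ d, 1 < |(i : ℤ) - (j : ℤ)| →
      primIdem d θs (matAs d θs φ) i * matA d θ * primIdem d θs (matAs d θs φ) j = 0)
    (hEs1 : ∀ i ≤ d, ∀ j ≤ d, |(i : ℤ) - (j : ℤ)| = 1 →
      primIdem d θs (matAs d θs φ) i * matA d θ * primIdem d θs (matAs d θs φ) j ≠ 0) :
    ∀ i ≤ d,
      Polynomial.aeval (matAs d θs φ) (etaPoly d θs (i)) * primIdem d θ (matA d θ) d * primIdem d θs (matAs d θs φ) 0 = ((∏ k ∈ Finset.Icc (d - i + 1) (d), φ k) / (tauPoly θ d).eval (θ d)) • (Polynomial.aeval (matA d θ) (tauPoly θ (d - i)) * primIdem d θs (matAs d θs φ) 0) :=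
  etas_ED_EsZero_general d θ θs φ hθs
end
end

section
/- One has E_d E*_d E_0 E*_0 = (ϕ_1 ϕ_2 ⋯ ϕ_d / (η_d(θ_0) τ*_d(θ*_d))) · E_d E*_0, where η_d(θ_0) = (θ_0−θ_d)⋯(θ_0−θ_1) and τ*_d(θ*_d) = (θ*_d−θ*_0)⋯(θ*_d−θ*_{d−1}) are nonzero since θ_0,…,θ_d are mutually distinct and θ*_0,…,θ*_d are mutually distinct. -/
open Polynomial Matrix Finset

noncomputable section

/-!
In the basis `v`, `A` raises, `(A - θ_{d-i}) v_i = v_{i+1}`, and `A*` lowers,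
`(A* - θ*_i) v_i = ϕ_i v_{i-1}`. Since `E_0, E_d, E*_0, E*_d` are `η_d(A), τ_d(A), η*_d(A*), τ*_d(A*)`
divided by their values at `θ_0, θ_d, θ*_0, θ*_d`, it suffices to show
`τ_d(A) τ*_d(A*) η_d(A) η*_d(A*) = ϕ_1 ⋯ ϕ_d τ_d(A) η*_d(A*)`, and to check it on each `v_i`:
`η*_d(A*)` maps `v_i` into `K v_0`, `η_d(A)` maps `v_0` to `v_d`, and `τ*_d(A*) v_d` is
`ϕ_1 ⋯ ϕ_d v_0` modulo `span {v_1, …, v_d}`, because each of its `d` factors lowers the index by at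
most one. Finally `τ_d(A)` kills `v_1, …, v_d`: `τ_d η_i` is a multiple of `τ_{d+1} = η_{d+1}`, and
`η_{d+1}(A) v_0 = (A - θ_0) v_d = 0`.
-/

section Polynomials

variable {K : Type*} [Field K] (θ : ℕ → K)

theorem tauPoly_succ (i : ℕ) : tauPoly θ (i + 1) = tauPoly θ i * (X - C (θ i)) :=
  prod_range_succ _ _

theorem etaPoly_succ (d i : ℕ) : etaPoly d θ (i + 1) = etaPoly d θ i * (X - C (θ (d - i))) :=
  prod_range_succ _ _

theorem etaPoly_self_eq_prod_Ioc (d : ℕ) : etaPoly d θ d = ∏ j ∈ Ioc 0 d, (X - C (θ j)) :=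
  prod_nbij' (fun k => d - k) (fun j => d - j) (by intro k; simp)
    (by intro j; simp; omega) (by intro k; simp; omega) (by intro j; simp; omega)
    (fun _ _ => rfl)

theorem tauPoly_succ_self_eq_etaPoly (d : ℕ) : tauPoly θ (d + 1) = etaPoly d θ (d + 1) := by
  rw [tauPoly, etaPoly, ← prod_range_reflect]
  simp only [add_tsub_cancel_right]

end Polynomials

section PrimitiveIdempotents

variable {K : Type*} [Field K] {d : ℕ} (θ : ℕ → K) (M : Matrix (Fin (d + 1)) (Fin (d + 1)) K)

theorem primIdem_eq_smul_aeval (i : ℕ) :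
    primIdem d θ M i = ((∏ j ∈ (range (d + 1)).erase i, (X - C (θ j))).eval (θ i))⁻¹ •
      aeval M (∏ j ∈ (range (d + 1)).erase i, (X - C (θ j))) := by
  rw [primIdem, prod_mul_distrib, ← map_prod, map_mul, aeval_C, Algebra.algebraMap_eq_smul_one,
    smul_mul_assoc, one_mul, eval_prod, ← prod_inv_distrib]
  simp only [eval_sub, eval_X, eval_C]

theorem primIdem_zero :
    primIdem d θ M 0 = ((etaPoly d θ d).eval (θ 0))⁻¹ • aeval M (etaPoly d θ d) := by
  have herase : (range (d + 1)).erase 0 = Ioc 0 d := by ext; simp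
  rw [primIdem_eq_smul_aeval, herase, etaPoly_self_eq_prod_Ioc]

theorem primIdem_self :
    primIdem d θ M d = ((tauPoly θ d).eval (θ d))⁻¹ • aeval M (tauPoly θ d) := by
  have herase : (range (d + 1)).erase d = range d := by ext; simp; omega
  rw [primIdem_eq_smul_aeval, herase, tauPoly]

end PrimitiveIdempotents

namespace Matrix

section CommRing

variable {n R : Type*} [Fintype n] [CommRing R]

theorem eq_of_mulVec_eq_of_span_eq_top {ι : Type*} {M N : Matrix n n R} {v : ι → n → R}
    (hv : Submodule.span R (Set.range v) = ⊤) (h : ∀ i, M *ᵥ v i = N *ᵥ v i) : M = N :=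
  ext_iff_mulVec.mpr fun x =>
    LinearMap.congr_fun (LinearMap.ext_on_range (f := M.mulVecLin) (g := N.mulVecLin) hv h) x

theorem mulVec_mem_span_Ioc_of_lowering {M : Matrix n n R} {θs ϕ : ℕ → R} {d : ℕ}
    {v : ℕ → n → R} (hlower : ∀ i, 1 ≤ i → i ≤ d → M *ᵥ v i - θs i • v i = ϕ i • v (i - 1))
    {i : ℕ} {x : n → R} (hx : x ∈ Submodule.span R (v '' Set.Ioc (i + 1) d)) :
    M *ᵥ x ∈ Submodule.span R (v '' Set.Ioc i d) := by
  have hgen : v '' Set.Ioc (i + 1) d ⊆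
      (Submodule.span R (v '' Set.Ioc i d)).comap M.mulVecLin := by
    rintro _ ⟨j, ⟨hj, hjd⟩, rfl⟩
    have hMv : M *ᵥ v j = ϕ j • v (j - 1) + θs j • v j :=
      eq_add_of_sub_eq (hlower j (by omega) hjd)
    change M *ᵥ v j ∈ Submodule.span R (v '' Set.Ioc i d)
    rw [hMv]
    exact add_mem
      (Submodule.smul_mem _ _ (Submodule.subset_span ⟨j - 1, ⟨by omega, by omega⟩, rfl⟩))
      (Submodule.smul_mem _ _ (Submodule.subset_span ⟨j, ⟨by omega, hjd⟩, rfl⟩))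
  exact Submodule.span_le.mpr hgen hx

variable [DecidableEq n]

theorem aeval_X_sub_C_mulVec (M : Matrix n n R) (c : R) (x : n → R) :
    aeval M (X - C c) *ᵥ x = M *ᵥ x - c • x := by
  rw [map_sub, aeval_X, aeval_C, Algebra.algebraMap_eq_smul_one, sub_mulVec, smul_mulVec,
    one_mulVec]

theorem aeval_mul_mulVec (M : Matrix n n R) (p q : R[X]) (x : n → R) :
    aeval M (p * q) *ᵥ x = aeval M p *ᵥ aeval M q *ᵥ x := by
  rw [map_mul, mulVec_mulVec]

theorem aeval_mulVec_of_mulVec_eq_smul {M : Matrix n n R} {c : R} {x : n → R}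
    (hx : M *ᵥ x = c • x) (p : R[X]) : aeval M p *ᵥ x = p.eval c • x := by
  have hroot : aeval M (X - C c) *ᵥ x = 0 := by
    rw [aeval_X_sub_C_mulVec, hx, sub_self]
  conv_lhs => rw [← modByMonic_add_div p (X - C c), modByMonic_X_sub_C_eq_C_eval,
    mul_comm, map_add, add_mulVec, aeval_mul_mulVec, hroot, mulVec_zero, add_zero, aeval_C,
    Algebra.algebraMap_eq_smul_one, smul_mulVec, one_mulVec]

variable {M : Matrix n n R} {θs ϕ : ℕ → R} {d : ℕ} {v : ℕ → n → R}

theorem aeval_prod_Ioc_mulVec_of_lowering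
    (hlower : ∀ i, 1 ≤ i → i ≤ d → M *ᵥ v i - θs i • v i = ϕ i • v (i - 1)) {i : ℕ}
    (hi : i ≤ d) :
    aeval M (∏ j ∈ Ioc 0 i, (X - C (θs j))) *ᵥ v i = (∏ j ∈ Ioc 0 i, ϕ j) • v 0 := by
  induction i with
  | zero => simp
  | succ i ih =>
    rw [prod_Ioc_succ_top i.zero_le, prod_Ioc_succ_top i.zero_le, aeval_mul_mulVec,
      aeval_X_sub_C_mulVec, hlower (i + 1) (by omega) hi, Nat.add_sub_cancel, mulVec_smul,
      ih (by omega), smul_smul, mul_comm]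

theorem aeval_prod_mulVec_sub_mem_span_of_lowering
    (hlower : ∀ i, 1 ≤ i → i ≤ d → M *ᵥ v i - θs i • v i = ϕ i • v (i - 1)) (c : ℕ → R) :
    ∀ m i, i + m = d → aeval M (∏ k ∈ range m, (X - C (c k))) *ᵥ v d -
      (∏ j ∈ Ioc i d, ϕ j) • v i ∈ Submodule.span R (v '' Set.Ioc i d) := by
  intro m
  induction m with
  | zero =>
    intro i hi
    obtain rfl : i = d := hi
    simp
  | succ m ih =>
    intro i hi
    set P := ∏ j ∈ Ioc (i + 1) d, ϕ j
    set y := aeval M (∏ k ∈ range m, (X - C (c k))) *ᵥ v d - P • v (i + 1)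
    have hy : y ∈ Submodule.span R (v '' Set.Ioc (i + 1) d) := ih (i + 1) (by omega)
    have hmono : Submodule.span R (v '' Set.Ioc (i + 1) d) ≤
        Submodule.span R (v '' Set.Ioc i d) :=
      Submodule.span_mono (Set.image_mono (Set.Ioc_subset_Ioc_left (by omega)))
    have hP : ∏ j ∈ Ioc i d, ϕ j = ϕ (i + 1) * P := by
      rw [← prod_Ioc_consecutive _ (Nat.le_succ i) (by omega : i + 1 ≤ d),
        Nat.Ioc_succ_singleton, prod_singleton]
    have hMv : M *ᵥ v (i + 1) = ϕ (i + 1) • v i + θs (i + 1) • v (i + 1) := by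
      simpa using eq_add_of_sub_eq (hlower (i + 1) (by omega) (by omega))
    have hsplit : aeval M (∏ k ∈ range (m + 1), (X - C (c k))) *ᵥ v d -
        (∏ j ∈ Ioc i d, ϕ j) • v i =
          (M *ᵥ y - c m • y) + (P * (θs (i + 1) - c m)) • v (i + 1) := by
      rw [prod_range_succ, mul_comm, aeval_mul_mulVec, aeval_X_sub_C_mulVec, hP]
      simp only [y, mulVec_sub, mulVec_smul, hMv]
      module
    rw [hsplit]
    exact add_mem (sub_mem (mulVec_mem_span_Ioc_of_lowering hlower hy)
      (Submodule.smul_mem _ _ (hmono hy)))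
      (Submodule.smul_mem _ _ (Submodule.subset_span ⟨i + 1, ⟨by omega, by omega⟩, rfl⟩))

end CommRing

variable {n K : Type*} [Fintype n] [DecidableEq n] [Field K] {d : ℕ} {v : ℕ → n → K}

section Raising

variable {M : Matrix n n K} {θ : ℕ → K}

theorem aeval_etaPoly_mulVec_of_raising
    (hraise : ∀ i < d, M *ᵥ v i - θ (d - i) • v i = v (i + 1)) {m : ℕ} (hm : m ≤ d) :
    aeval M (etaPoly d θ m) *ᵥ v 0 = v m := by
  induction m with
  | zero => simp [etaPoly]
  | succ m ih =>
    rw [etaPoly_succ, mul_comm, aeval_mul_mulVec, ih (by omega), aeval_X_sub_C_mulVec,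
      hraise m (by omega)]

theorem aeval_etaPoly_succ_self_mulVec_of_raising
    (hraise : ∀ i < d, M *ᵥ v i - θ (d - i) • v i = v (i + 1))
    (hbottom : M *ᵥ v d - θ 0 • v d = 0) :
    aeval M (etaPoly d θ (d + 1)) *ᵥ v 0 = 0 := by
  rw [etaPoly_succ, mul_comm, aeval_mul_mulVec, aeval_etaPoly_mulVec_of_raising hraise le_rfl,
    aeval_X_sub_C_mulVec, Nat.sub_self, hbottom]

theorem aeval_tauPoly_mulVec_of_raising
    (hraise : ∀ i < d, M *ᵥ v i - θ (d - i) • v i = v (i + 1))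
    (hbottom : M *ᵥ v d - θ 0 • v d = 0) {i : ℕ} (hi : 0 < i) (hid : i ≤ d) :
    aeval M (tauPoly θ d) *ᵥ v i = 0 := by
  obtain ⟨j, rfl⟩ : ∃ j, i = j + 1 := Nat.exists_eq_add_one.mpr hi
  have hfactor : tauPoly θ d * etaPoly d θ (j + 1) =
      (∏ k ∈ range j, (X - C (θ (d - (k + 1))))) * etaPoly d θ (d + 1) := by
    rw [← tauPoly_succ_self_eq_etaPoly, tauPoly_succ, etaPoly, prod_range_succ', Nat.sub_zero]
    ring
  rw [← aeval_etaPoly_mulVec_of_raising hraise hid, ← aeval_mul_mulVec, hfactor,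
    aeval_mul_mulVec, aeval_etaPoly_succ_self_mulVec_of_raising hraise hbottom, mulVec_zero]

theorem span_Ioc_le_ker_aeval_tauPoly_of_raising
    (hraise : ∀ i < d, M *ᵥ v i - θ (d - i) • v i = v (i + 1))
    (hbottom : M *ᵥ v d - θ 0 • v d = 0) :
    Submodule.span K (v '' Set.Ioc 0 d) ≤ LinearMap.ker (aeval M (tauPoly θ d)).mulVecLin :=
  Submodule.span_le.mpr fun _ ⟨_, ⟨hi, hid⟩, hx⟩ =>
    hx ▸ aeval_tauPoly_mulVec_of_raising hraise hbottom hi hid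

end Raising

theorem aeval_etaPoly_mulVec_mem_span_singleton_of_lowering {M : Matrix n n K} {θs ϕ : ℕ → K}
    (hlower : ∀ i, 1 ≤ i → i ≤ d → M *ᵥ v i - θs i • v i = ϕ i • v (i - 1))
    (htop : M *ᵥ v 0 - θs 0 • v 0 = 0) {i : ℕ} (hi : i ≤ d) :
    aeval M (etaPoly d θs d) *ᵥ v i ∈ K ∙ v 0 := by
  rw [etaPoly_self_eq_prod_Ioc, ← prod_Ioc_consecutive _ i.zero_le hi, mul_comm,
    aeval_mul_mulVec, aeval_prod_Ioc_mulVec_of_lowering hlower hi, mulVec_smul,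
    aeval_mulVec_of_mulVec_eq_smul (sub_eq_zero.mp htop)]
  exact Submodule.smul_mem _ _ (Submodule.smul_mem _ _ (Submodule.mem_span_singleton_self _))

theorem aeval_tauPoly_mul_tauPoly_mul_etaPoly_mul_etaPoly (A As : Matrix n n K)
    (θ θs ϕ : ℕ → K)
    (hspan : Submodule.span K (Set.range fun i : Fin (d + 1) => v i) = ⊤)
    (hraise : ∀ i < d, A *ᵥ v i - θ (d - i) • v i = v (i + 1))
    (hbottom : A *ᵥ v d - θ 0 • v d = 0)
    (hlower : ∀ i, 1 ≤ i → i ≤ d → As *ᵥ v i - θs i • v i = ϕ i • v (i - 1))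
    (htop : As *ᵥ v 0 - θs 0 • v 0 = 0) :
    aeval A (tauPoly θ d) * aeval As (tauPoly θs d) * aeval A (etaPoly d θ d) *
        aeval As (etaPoly d θs d) =
      (∏ k ∈ Ioc 0 d, ϕ k) • (aeval A (tauPoly θ d) * aeval As (etaPoly d θs d)) := by
  have hlead : aeval A (tauPoly θ d) *ᵥ aeval As (tauPoly θs d) *ᵥ v d =
      (∏ k ∈ Ioc 0 d, ϕ k) • aeval A (tauPoly θ d) *ᵥ v 0 := by
    have hrest := span_Ioc_le_ker_aeval_tauPoly_of_raising hraise hbottom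
      (aeval_prod_mulVec_sub_mem_span_of_lowering hlower θs d 0 (zero_add d))
    rwa [LinearMap.mem_ker, mulVecLin_apply, mulVec_sub, mulVec_smul, sub_eq_zero] at hrest
  refine eq_of_mulVec_eq_of_span_eq_top hspan fun i => ?_
  obtain ⟨α, hα⟩ := Submodule.mem_span_singleton.mp
    (aeval_etaPoly_mulVec_mem_span_singleton_of_lowering hlower htop i.is_le)
  simp only [← mulVec_mulVec, smul_mulVec, ← hα, mulVec_smul,
    aeval_etaPoly_mulVec_of_raising hraise le_rfl, hlead, smul_comm α]

end Matrix

theorem ED_EsD_EZero_EsZero_general {K : Type*} [Field K] (d : ℕ) (θ θs φ ϕ : ℕ → K)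
    (v : ℕ → Fin (d + 1) → K)
    (hvsp : Submodule.span K (Set.range fun i : Fin (d + 1) => v (i : ℕ)) = ⊤)
    (hv1 : ∀ i < d, (matA d θ).mulVec (v i) - θ (d - i) • v i = v (i + 1))
    (hv2 : (matA d θ).mulVec (v d) - θ 0 • v d = 0)
    (hv3 : ∀ i, 1 ≤ i → i ≤ d →
      (matAs d θs φ).mulVec (v i) - θs i • v i = ϕ i • v (i - 1))
    (hv4 : (matAs d θs φ).mulVec (v 0) - θs 0 • v 0 = 0) :
    primIdem d θ (matA d θ) d * primIdem d θs (matAs d θs φ) d * primIdem d θ (matA d θ) 0 * primIdem d θs (matAs d θs φ) 0 = ((∏ k ∈ Finset.Icc (1) (d), ϕ k) / ((etaPoly d θ d).eval (θ 0) * (tauPoly θs d).eval (θs d))) • (primIdem d θ (matA d θ) d * primIdem d θs (matAs d θs φ) 0) := by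
  rw [primIdem_self, primIdem_self, primIdem_zero, primIdem_zero]
  simp only [smul_mul_assoc, mul_smul_comm, smul_smul]
  rw [Matrix.aeval_tauPoly_mul_tauPoly_mul_etaPoly_mul_etaPoly _ _ θ θs ϕ hvsp hv1 hv2 hv3 hv4,
    smul_smul, ← Icc_add_one_left_eq_Ioc, zero_add]
  congr 1
  rw [div_eq_mul_inv, mul_inv]
  ring

theorem ED_EsD_EZero_EsZero {K : Type*} [Field K] (d : ℕ) (θ θs φ ϕ : ℕ → K)
    (hθ : ∀ i ≤ d, ∀ j ≤ d, θ i = θ j → i = j)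
    (hθs : ∀ i ≤ d, ∀ j ≤ d, θs i = θs j → i = j)
    (hφ : ∀ i, 1 ≤ i → i ≤ d → φ i ≠ 0)
    (hE0 : ∀ i ≤ d, ∀ j ≤ d, 1 < |(i : ℤ) - (j : ℤ)| →
      primIdem d θ (matA d θ) i * matAs d θs φ * primIdem d θ (matA d θ) j = 0)
    (hE1 : ∀ i ≤ d, ∀ j ≤ d, |(i : ℤ) - (j : ℤ)| = 1 →
      primIdem d θ (matA d θ) i * matAs d θs φ * primIdem d θ (matA d θ) j ≠ 0)
    (hEs0 : ∀ i ≤ d, ∀ j ≤ d, 1 < |(i : ℤ) - (j : ℤ)| →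
      primIdem d θs (matAs d θs φ) i * matA d θ * primIdem d θs (matAs d θs φ) j = 0)
    (hEs1 : ∀ i ≤ d, ∀ j ≤ d, |(i : ℤ) - (j : ℤ)| = 1 →
      primIdem d θs (matAs d θs φ) i * matA d θ * primIdem d θs (matAs d θs φ) j ≠ 0)
    (hϕ : ∀ i, 1 ≤ i → i ≤ d → ϕ i ≠ 0)
    (v : ℕ → Fin (d + 1) → K)
    (hvli : LinearIndependent K fun i : Fin (d + 1) => v (i : ℕ))
    (hvsp : Submodule.span K (Set.range fun i : Fin (d + 1) => v (i : ℕ)) = ⊤)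
    (hv1 : ∀ i < d, (matA d θ).mulVec (v i) - θ (d - i) • v i = v (i + 1))
    (hv2 : (matA d θ).mulVec (v d) - θ 0 • v d = 0)
    (hv3 : ∀ i, 1 ≤ i → i ≤ d →
      (matAs d θs φ).mulVec (v i) - θs i • v i = ϕ i • v (i - 1))
    (hv4 : (matAs d θs φ).mulVec (v 0) - θs 0 • v 0 = 0) :
    primIdem d θ (matA d θ) d * primIdem d θs (matAs d θs φ) d * primIdem d θ (matA d θ) 0 * primIdem d θs (matAs d θs φ) 0 = ((∏ k ∈ Finset.Icc (1) (d), ϕ k) / ((etaPoly d θ d).eval (θ 0) * (tauPoly θs d).eval (θs d))) • (primIdem d θ (matA d θ) d * primIdem d θs (matAs d θs φ) 0) :=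
  ED_EsD_EZero_EsZero_general d θ θs φ ϕ v hvsp hv1 hv2 hv3 hv4
end
end

section
/- One has E_d E*_0 E_0 E*_d = (φ_1 φ_2 ⋯ φ_d / (η_d(θ_0) η*_d(θ*_0))) · E_d E*_d, where η_d(θ_0) = (θ_0−θ_d)⋯(θ_0−θ_1) and η*_d(θ*_0) = (θ*_0−θ*_d)⋯(θ*_0−θ*_1) are nonzero since θ_0,…,θ_d are mutually distinct and θ*_0,…,θ*_d are mutually distinct. -/
open Polynomial Matrix Finset

noncomputable section

namespace LeonardAux
variable {K : Type*} [Field K]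

/-- indicator basis vector `e_k` -/
def ev (d k : ℕ) : Fin (d + 1) → K := fun i => if (i : ℕ) = k then 1 else 0

lemma mulVec_ev (d : ℕ) (M : Matrix (Fin (d+1)) (Fin (d+1)) K) (k : ℕ) (hk : k < d + 1) :
    M *ᵥ ev d k = fun i => M i ⟨k, hk⟩ := by
  funext i
  simp only [Matrix.mulVec, dotProduct, ev, mul_ite, mul_one, mul_zero]
  rw [Finset.sum_eq_single_of_mem (⟨k, hk⟩ : Fin (d+1)) (Finset.mem_univ _)]
  · simp
  · intro b _ hb
    exact if_neg (fun hc => hb (Fin.ext hc))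

lemma vecMul_ev (d : ℕ) (M : Matrix (Fin (d+1)) (Fin (d+1)) K) (k : ℕ) (hk : k < d + 1) :
    ev d k ᵥ* M = fun j => M ⟨k, hk⟩ j := by
  funext j
  simp only [Matrix.vecMul, dotProduct, ev, ite_mul, one_mul, zero_mul]
  rw [Finset.sum_eq_single_of_mem (⟨k, hk⟩ : Fin (d+1)) (Finset.mem_univ _)]
  · simp
  · intro b _ hb
    exact if_neg (fun hc => hb (Fin.ext hc))

lemma aeval_X_sub_C (d : ℕ) (M : Matrix (Fin (d+1)) (Fin (d+1)) K) (c : K) :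
    aeval M (X - C c) = M - c • (1 : Matrix (Fin (d+1)) (Fin (d+1)) K) := by
  simp [Algebra.algebraMap_eq_smul_one]

variable {d : ℕ}

lemma stepA (θ : ℕ → K) (k : ℕ) (hk : k < d) :
    (matA d θ - θ k • 1) *ᵥ ev d k = (ev d (k+1) : Fin (d+1) → K) := by
  funext i
  rw [mulVec_ev d _ k (by omega)]
  simp only [Matrix.sub_apply, Matrix.smul_apply, Matrix.one_apply, matA, Matrix.of_apply,
    ev, smul_eq_mul, Fin.ext_iff]
  rcases eq_or_ne (i : ℕ) k with h | h
  · rw [h]; split_ifs <;> first | ring1 | (exfalso; omega) | simp_all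
  · rcases eq_or_ne (i : ℕ) (k+1) with h2 | h2
    · rw [h2]; split_ifs <;> first | ring1 | (exfalso; omega) | simp_all
    · split_ifs <;> first | ring1 | (exfalso; omega) | simp_all

lemma stepAd (θ : ℕ → K) :
    (matA d θ - θ d • 1) *ᵥ ev d d = (0 : Fin (d+1) → K) := by
  funext i
  rw [mulVec_ev d _ d (by omega)]
  simp only [Matrix.sub_apply, Matrix.smul_apply, Matrix.one_apply, matA, Matrix.of_apply,
    ev, smul_eq_mul, Fin.ext_iff, Pi.zero_apply]
  rcases eq_or_ne (i : ℕ) d with h | h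
  · rw [h]; split_ifs <;> first | ring1 | (exfalso; omega) | simp_all
  · have h2 : (i : ℕ) ≠ d + 1 := by omega
    split_ifs <;> first | ring1 | (exfalso; omega) | simp_all

lemma stepAs0 (θs φ : ℕ → K) :
    (matAs d θs φ - θs 0 • 1) *ᵥ ev d 0 = (0 : Fin (d+1) → K) := by
  funext i
  rw [mulVec_ev d _ 0 (by omega)]
  simp only [Matrix.sub_apply, Matrix.smul_apply, Matrix.one_apply, matAs, Matrix.of_apply,
    ev, smul_eq_mul, Fin.ext_iff, Pi.zero_apply]
  rcases eq_or_ne (i : ℕ) 0 with h | h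
  · rw [h]; split_ifs <;> first | ring1 | (exfalso; omega) | simp_all
  · split_ifs <;> first | ring1 | (exfalso; omega) | simp_all

lemma stepAs (θs φ : ℕ → K) (k : ℕ) (hk1 : 1 ≤ k) (hk : k ≤ d) :
    (matAs d θs φ - θs k • 1) *ᵥ ev d k = φ k • (ev d (k-1) : Fin (d+1) → K) := by
  funext i
  rw [mulVec_ev d _ k (by omega)]
  simp only [Matrix.sub_apply, Matrix.smul_apply, Matrix.one_apply, matAs, Matrix.of_apply,
    ev, smul_eq_mul, Fin.ext_iff, Pi.smul_apply]
  rcases eq_or_ne (i : ℕ) k with h | h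
  · rw [h]; split_ifs <;> first | ring1 | (exfalso; omega) | simp_all
  · rcases eq_or_ne (i : ℕ) (k-1) with h2 | h2
    · split_ifs <;> first | ring1 | (exfalso; omega) | simp_all
    · split_ifs <;> first | ring1 | (exfalso; omega) | simp_all

lemma rowA (θ : ℕ → K) (k : ℕ) (hk1 : 1 ≤ k) (hk : k ≤ d) :
    ev d k ᵥ* (matA d θ - θ k • 1) = (ev d (k-1) : Fin (d+1) → K) := by
  funext j
  rw [vecMul_ev d _ k (by omega)]
  simp only [Matrix.sub_apply, Matrix.smul_apply, Matrix.one_apply, matA, Matrix.of_apply,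
    ev, smul_eq_mul, Fin.ext_iff]
  rcases eq_or_ne (j : ℕ) k with h | h
  · rw [h]; split_ifs <;> first | ring1 | (exfalso; omega) | simp_all
  · rcases eq_or_ne (j : ℕ) (k-1) with h2 | h2
    · split_ifs <;> first | ring1 | (exfalso; omega) | simp_all
    · split_ifs <;> first | ring1 | (exfalso; omega) | simp_all

lemma rowAs (θs φ : ℕ → K) (k : ℕ) (hk : k < d) :
    ev d k ᵥ* (matAs d θs φ - θs k • 1) = φ (k+1) • (ev d (k+1) : Fin (d+1) → K) := by
  funext j
  rw [vecMul_ev d _ k (by omega)]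
  simp only [Matrix.sub_apply, Matrix.smul_apply, Matrix.one_apply, matAs, Matrix.of_apply,
    ev, smul_eq_mul, Fin.ext_iff, Pi.smul_apply]
  rcases eq_or_ne (j : ℕ) k with h | h
  · rw [h]; split_ifs <;> first | ring1 | (exfalso; omega) | simp_all
  · rcases eq_or_ne (j : ℕ) (k+1) with h2 | h2
    · rw [h2]; split_ifs <;> first | ring1 | (exfalso; omega) | simp_all
    · split_ifs <;> first | ring1 | (exfalso; omega) | simp_all


lemma colKillAs (θs φ : ℕ → K) :
    ∀ k, k ≤ d → aeval (matAs d θs φ) (tauPoly θs (k+1)) *ᵥ ev d k = (0 : Fin (d+1) → K)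
  | 0, _ => by
    have : tauPoly θs 1 = X - C (θs 0) := by
      simp [tauPoly]
    rw [this, aeval_X_sub_C, stepAs0]
  | (k+1), hk => by
    have hstep : tauPoly (K := K) θs (k+2) = tauPoly θs (k+1) * (X - C (θs (k+1))) := by
      simp [tauPoly, Finset.prod_range_succ]
    rw [hstep, _root_.map_mul, ← Matrix.mulVec_mulVec, aeval_X_sub_C,
      stepAs θs φ (k+1) (by omega) hk]
    show _ *ᵥ (φ (k+1) • ev d k) = _
    rw [Matrix.mulVec_smul, colKillAs θs φ k (by omega), smul_zero]

lemma colKillA (θ : ℕ → K) :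
    ∀ m, m ≤ d → aeval (matA d θ) (∏ j ∈ Ico (d-m) (d+1), (X - C (θ j))) *ᵥ ev d (d-m)
      = (0 : Fin (d+1) → K)
  | 0, _ => by
    have : ∏ j ∈ Ico (d-0) (d+1), (X - C (θ j)) = X - C (θ d) := by
      simp
    rw [this, aeval_X_sub_C, Nat.sub_zero, stepAd]
  | (m+1), hm => by
    have hk : d - (m+1) < d + 1 := by omega
    have hstep : ∏ j ∈ Ico (d-(m+1)) (d+1), (X - C (θ j))
        = (∏ j ∈ Ico (d-(m+1)+1) (d+1), (X - C (θ j))) * (X - C (θ (d-(m+1)))) := by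
      rw [Finset.prod_eq_prod_Ico_succ_bot hk, mul_comm]
    rw [hstep, _root_.map_mul, ← Matrix.mulVec_mulVec, aeval_X_sub_C,
      stepA θ (d-(m+1)) (by omega), show d-(m+1)+1 = d-m by omega,
      colKillA θ m (by omega)]

lemma killA (θ : ℕ → K) :
    aeval (matA d θ) (∏ j ∈ range (d+1), (X - C (θ j))) = 0 := by
  have hcol : ∀ k, k ≤ d →
      aeval (matA d θ) (∏ j ∈ range (d+1), (X - C (θ j))) *ᵥ ev d k = (0 : Fin (d+1) → K) := by
    intro k hk
    have hsplit : ∏ j ∈ range (d+1), (X - C (θ j))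
        = (∏ j ∈ Ico 0 k, (X - C (θ j))) * ∏ j ∈ Ico k (d+1), (X - C (θ j)) := by
      rw [Finset.range_eq_Ico, ← Finset.prod_Ico_consecutive _ (Nat.zero_le k) (by omega)]
    rw [hsplit, _root_.map_mul, ← Matrix.mulVec_mulVec]
    have := colKillA (d := d) θ (d - k) (by omega)
    rw [show d - (d - k) = k by omega] at this
    rw [this, Matrix.mulVec_zero]
  ext i j
  have h1 := congrFun (hcol (j : ℕ) (by omega)) i
  rw [mulVec_ev d _ (j : ℕ) (by omega)] at h1
  simpa using h1

lemma killAs (θs φ : ℕ → K) :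
    aeval (matAs d θs φ) (∏ j ∈ range (d+1), (X - C (θs j))) = 0 := by
  have hcol : ∀ k, k ≤ d →
      aeval (matAs d θs φ) (∏ j ∈ range (d+1), (X - C (θs j))) *ᵥ ev d k
        = (0 : Fin (d+1) → K) := by
    intro k hk
    have hsplit : ∏ j ∈ range (d+1), (X - C (θs j))
        = (∏ j ∈ Ico (k+1) (d+1), (X - C (θs j))) * tauPoly θs (k+1) := by
      rw [mul_comm]
      show _ = (∏ j ∈ range (k+1), (X - C (θs j))) * _
      rw [Finset.prod_range_mul_prod_Ico _ (by omega)]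
    rw [hsplit, _root_.map_mul, ← Matrix.mulVec_mulVec, colKillAs θs φ k hk, Matrix.mulVec_zero]
  ext i j
  have h1 := congrFun (hcol (j : ℕ) (by omega)) i
  rw [mulVec_ev d _ (j : ℕ) (by omega)] at h1
  simpa using h1

lemma rowEtaA (θ : ℕ → K) :
    ∀ m, m ≤ d → ev d d ᵥ* aeval (matA d θ) (etaPoly d θ m) = (ev d (d-m) : Fin (d+1) → K)
  | 0, _ => by
    simp [etaPoly]
  | (m+1), hm => by
    have hstep : etaPoly (K := K) d θ (m+1) = etaPoly d θ m * (X - C (θ (d-m))) := by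
      simp [etaPoly, Finset.prod_range_succ]
    rw [hstep, _root_.map_mul, ← Matrix.vecMul_vecMul, rowEtaA θ m (by omega), aeval_X_sub_C,
      rowA θ (d-m) (by omega) (by omega), show d-m-1 = d-(m+1) by omega]

lemma rowTauAs (θs φ : ℕ → K) :
    ∀ m, m ≤ d → ev d 0 ᵥ* aeval (matAs d θs φ) (tauPoly θs m)
      = (∏ k ∈ Icc 1 m, φ k) • (ev d m : Fin (d+1) → K)
  | 0, _ => by
    simp [tauPoly]
  | (m+1), hm => by
    have hstep : tauPoly (K := K) θs (m+1) = tauPoly θs m * (X - C (θs m)) := by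
      simp [tauPoly, Finset.prod_range_succ]
    rw [hstep, _root_.map_mul, ← Matrix.vecMul_vecMul, rowTauAs θs φ m (by omega), aeval_X_sub_C]
    rw [Matrix.smul_vecMul, rowAs θs φ m (by omega), smul_smul,
      Finset.prod_Icc_succ_top (by omega : 1 ≤ m + 1)]


lemma primIdem_eq (v : ℕ → K) (M : Matrix (Fin (d+1)) (Fin (d+1)) K) (i : ℕ) :
    primIdem d v M i = aeval M (Lagrange.basis (range (d+1)) v i) := rfl

lemma sumPrim (v : ℕ → K) (M : Matrix (Fin (d+1)) (Fin (d+1)) K)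
    (hv : ∀ i ≤ d, ∀ j ≤ d, v i = v j → i = j) :
    ∑ i ∈ range (d+1), primIdem d v M i = 1 := by
  have hinj : Set.InjOn v (range (d+1) : Finset ℕ) := by
    intro a ha b hb hab
    simp only [coe_range, Set.mem_Iio] at ha hb
    exact hv a (by omega) b (by omega) hab
  have hsum := Lagrange.sum_basis hinj ⟨0, mem_range.mpr (by omega)⟩
  calc ∑ i ∈ range (d+1), primIdem d v M i
      = aeval M (∑ i ∈ range (d+1), Lagrange.basis (range (d+1)) v i) := by
        rw [map_sum]
        rfl
    _ = 1 := by rw [hsum, _root_.map_one]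

lemma aeval_mul_primIdem (v : ℕ → K) (M : Matrix (Fin (d+1)) (Fin (d+1)) K)
    (hkill : aeval M (∏ j ∈ range (d+1), (X - C (v j))) = 0)
    (i : ℕ) (hi : i ≤ d) (p : K[X]) :
    aeval M p * primIdem d v M i = p.eval (v i) • primIdem d v M i := by
  have hmem : i ∈ range (d+1) := mem_range.mpr (by omega)
  have hpoly : (X - C (v i)) * (∏ j ∈ (range (d+1)).erase i, (C ((v i - v j)⁻¹) * (X - C (v j))))
      = C (∏ j ∈ (range (d+1)).erase i, (v i - v j)⁻¹) * ∏ j ∈ range (d+1), (X - C (v j)) := by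
    rw [Finset.prod_mul_distrib, ← map_prod, ← Finset.mul_prod_erase _ _ hmem]
    ring
  have hzero : aeval M (X - C (v i)) * primIdem d v M i = 0 := by
    rw [primIdem, ← _root_.map_mul, hpoly, _root_.map_mul, hkill, mul_zero]
  obtain ⟨q, hq⟩ := Polynomial.X_sub_C_dvd_sub_C_eval (a := v i) (p := p)
  have hp : p = q * (X - C (v i)) + C (p.eval (v i)) := by linear_combination hq
  calc aeval M p * primIdem d v M i
      = aeval M q * (aeval M (X - C (v i)) * primIdem d v M i)
        + p.eval (v i) • primIdem d v M i := by
        conv_lhs => rw [hp]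
        rw [map_add, _root_.map_mul, aeval_C, add_mul, mul_assoc,
          Algebra.algebraMap_eq_smul_one, smul_mul_assoc, one_mul]
    _ = p.eval (v i) • primIdem d v M i := by rw [hzero, mul_zero, zero_add]

lemma specCollapse (v : ℕ → K) (M : Matrix (Fin (d+1)) (Fin (d+1)) K)
    (hkill : aeval M (∏ j ∈ range (d+1), (X - C (v j))) = 0)
    (hv : ∀ i ≤ d, ∀ j ≤ d, v i = v j → i = j)
    (p : K[X]) (i₀ : ℕ) (hi₀ : i₀ ≤ d)
    (hz : ∀ i, i ≤ d → i ≠ i₀ → p.eval (v i) = 0) :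
    aeval M p = p.eval (v i₀) • primIdem d v M i₀ := by
  calc aeval M p = aeval M p * ∑ i ∈ range (d+1), primIdem d v M i := by
        rw [sumPrim v M hv, mul_one]
    _ = ∑ i ∈ range (d+1), p.eval (v i) • primIdem d v M i := by
        rw [Finset.mul_sum]
        exact Finset.sum_congr rfl fun i hi =>
          aeval_mul_primIdem v M hkill i (Nat.lt_succ_iff.mp (mem_range.mp hi)) p
    _ = p.eval (v i₀) • primIdem d v M i₀ := by
        apply Finset.sum_eq_single_of_mem i₀ (mem_range.mpr (by omega))
        intro b hb hbne
        rw [hz b (Nat.lt_succ_iff.mp (mem_range.mp hb)) hbne, zero_smul]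

lemma basis_eval_zero (v : ℕ → K) (i j : ℕ) (hi : i ≤ d) (hj : j ≤ d) (hne : j ≠ i) :
    (Lagrange.basis (range (d+1)) v i).eval (v j) = 0 := by
  rw [Lagrange.basis, Polynomial.eval_prod]
  apply Finset.prod_eq_zero (i := j) (Finset.mem_erase.mpr ⟨hne, mem_range.mpr (by omega)⟩)
  simp [Lagrange.basisDivisor]


lemma monic_tau (θs : ℕ → K) (n : ℕ) : (tauPoly θs n).Monic :=
  monic_prod_of_monic _ _ fun _ _ => monic_X_sub_C _

lemma monic_eta (θ : ℕ → K) (n : ℕ) : (etaPoly d θ n).Monic :=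
  monic_prod_of_monic _ _ fun _ _ => monic_X_sub_C _

lemma natDegree_tau (θs : ℕ → K) (n : ℕ) : (tauPoly θs n).natDegree = n := by
  rw [tauPoly, Polynomial.natDegree_prod _ _ fun i _ => X_sub_C_ne_zero _]
  simp

lemma natDegree_eta (θ : ℕ → K) (n : ℕ) : (etaPoly d θ n).natDegree = n := by
  rw [etaPoly, Polynomial.natDegree_prod _ _ fun i _ => X_sub_C_ne_zero _]
  simp

lemma pathE (θ θs φ : ℕ → K)
    (hθ : ∀ i ≤ d, ∀ j ≤ d, θ i = θ j → i = j)
    (hE0 : ∀ i ≤ d, ∀ j ≤ d, 1 < |(i : ℤ) - (j : ℤ)| →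
      primIdem d θ (matA d θ) i * matAs d θs φ * primIdem d θ (matA d θ) j = 0) :
    ∀ n, ∀ j, j ≤ d → n + j < d →
      primIdem d θ (matA d θ) d * (matAs d θs φ)^n * primIdem d θ (matA d θ) j = 0
  | 0 => by
    intro j hj hnj
    rw [pow_zero, mul_one, primIdem_eq θ _ d,
      aeval_mul_primIdem θ _ (killA θ) j hj _,
      basis_eval_zero θ d j le_rfl hj (by omega), zero_smul]
  | (n+1) => by
    intro j hj hnj
    set E := primIdem d θ (matA d θ) with hE
    set As := matAs d θs φ with hAs
    have hsum := sumPrim θ (matA d θ) hθ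
    have h1 : E d * As^(n+1) * E j = (E d * As^n) * ((∑ k ∈ range (d+1), E k) * (As * E j)) := by
      rw [hsum, pow_succ]
      noncomm_ring
    rw [h1, Finset.sum_mul, Finset.mul_sum]
    apply Finset.sum_eq_zero
    intro k hk
    have hk' : k ≤ d := Nat.lt_succ_iff.mp (mem_range.mp hk)
    by_cases hcase : n + k < d
    · have h0 : E d * As^n * E k = 0 := pathE θ θs φ hθ hE0 n k hk' hcase
      rw [← mul_assoc, h0, zero_mul]
    · have habs : 1 < |(k : ℤ) - (j : ℤ)| :=
        lt_of_lt_of_le (by omega) (le_abs_self _)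
      have hEkj : E k * As * E j = 0 := hE0 k hk' j hj habs
      rw [show E k * (As * E j) = E k * As * E j from (mul_assoc _ _ _).symm, hEkj, mul_zero]

lemma factC (θ θs φ : ℕ → K)
    (hθ : ∀ i ≤ d, ∀ j ≤ d, θ i = θ j → i = j)
    (hE0 : ∀ i ≤ d, ∀ j ≤ d, 1 < |(i : ℤ) - (j : ℤ)| →
      primIdem d θ (matA d θ) i * matAs d θs φ * primIdem d θ (matA d θ) j = 0) :
    primIdem d θ (matA d θ) d * aeval (matAs d θs φ) (etaPoly d θs d)
      * primIdem d θ (matA d θ) 0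
    = primIdem d θ (matA d θ) d * aeval (matAs d θs φ) (tauPoly θs d)
      * primIdem d θ (matA d θ) 0 := by
  set E := primIdem d θ (matA d θ) with hEdef
  set As := matAs d θs φ with hAsdef
  set q : K[X] := etaPoly d θs d - tauPoly θs d with hqdef
  have hEq : aeval As (etaPoly d θs d) = aeval As (tauPoly θs d) + aeval As q := by
    rw [hqdef, map_sub]
    abel
  suffices hz : E d * aeval As q * E 0 = 0 by
    rw [hEq, mul_add, add_mul, hz, add_zero]
  by_cases hq0 : q = 0
  · rw [hq0, map_zero, mul_zero, zero_mul]
  · have hne : etaPoly d θs d ≠ 0 := (monic_eta θs d).ne_zero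
    have hdd : (etaPoly d θs d).degree = (tauPoly θs d).degree := by
      rw [Polynomial.degree_eq_natDegree hne,
        Polynomial.degree_eq_natDegree (monic_tau θs d).ne_zero,
        natDegree_eta, natDegree_tau]
    have hlt := Polynomial.degree_sub_lt hdd hne
      (by rw [(monic_eta θs d).leadingCoeff, (monic_tau θs d).leadingCoeff])
    rw [Polynomial.degree_eq_natDegree hne, natDegree_eta] at hlt
    have hdeg : q.natDegree < d :=
      (Polynomial.natDegree_lt_iff_degree_lt hq0).mpr (by exact_mod_cast hlt)
    rw [Polynomial.aeval_eq_sum_range' hdeg, Finset.mul_sum, Finset.sum_mul]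
    apply Finset.sum_eq_zero
    intro n hn
    rw [mul_smul_comm, smul_mul_assoc,
      pathE θ θs φ hθ hE0 n 0 (Nat.zero_le d) (by simpa using mem_range.mp hn), smul_zero]


lemma key3 (θ θs φ : ℕ → K) :
    aeval (matAs d θs φ) (tauPoly θs d) * aeval (matA d θ) (etaPoly d θ d)
      * aeval (matAs d θs φ) (tauPoly θs d)
    = (∏ k ∈ Icc 1 d, φ k) • aeval (matAs d θs φ) (tauPoly θs d) := by
  set M := aeval (matAs d θs φ) (tauPoly θs d) with hM
  set H := aeval (matA d θ) (etaPoly d θ d) with hH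
  have colM : ∀ (j : Fin (d+1)), (j : ℕ) ≠ d → ∀ i, M i j = 0 := by
    intro j hj i
    have hsplit : tauPoly (K := K) θs d
        = (∏ l ∈ Ico ((j:ℕ)+1) d, (X - C (θs l))) * tauPoly θs ((j:ℕ)+1) := by
      rw [mul_comm]
      show _ = (∏ l ∈ range ((j:ℕ)+1), (X - C (θs l))) * _
      rw [Finset.prod_range_mul_prod_Ico _ (by omega)]
      rfl
    have h0 : M *ᵥ ev d (j:ℕ) = 0 := by
      rw [hM, hsplit, _root_.map_mul, ← Matrix.mulVec_mulVec,
        colKillAs θs φ (j:ℕ) (by omega), Matrix.mulVec_zero]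
    have h1 := congrFun h0 i
    rw [mulVec_ev d _ (j:ℕ) (by omega)] at h1
    simpa using h1
  have rowH : ∀ l, H ⟨d, by omega⟩ l = ev d 0 l := by
    intro l
    have h1 := congrFun (rowEtaA θ d le_rfl) l
    rw [vecMul_ev d _ d (by omega)] at h1
    simpa using h1
  have rowM : ∀ l, M ⟨0, by omega⟩ l = (∏ k ∈ Icc 1 d, φ k) * ev d d l := by
    intro l
    have h1 := congrFun (rowTauAs θs φ d le_rfl) l
    rw [vecMul_ev d _ 0 (by omega)] at h1
    simpa using h1
  ext i j
  rw [mul_assoc, Matrix.mul_apply, Matrix.smul_apply, smul_eq_mul]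
  rw [Finset.sum_eq_single_of_mem (⟨d, by omega⟩ : Fin (d+1)) (Finset.mem_univ _)
    (fun b _ hb => by rw [colM b (fun hc => hb (Fin.ext hc)) i, zero_mul])]
  rw [Matrix.mul_apply]
  rw [Finset.sum_eq_single_of_mem (⟨0, by omega⟩ : Fin (d+1)) (Finset.mem_univ _)
    (fun b _ hb => by
      rw [rowH b, show ev (K := K) d 0 b = 0 from if_neg (fun hc => hb (Fin.ext hc)), zero_mul])]
  rw [rowH, rowM, show ev (K := K) d 0 (⟨0, by omega⟩ : Fin (d+1)) = 1 from if_pos rfl, one_mul]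
  rcases eq_or_ne (j : ℕ) d with hj | hj
  · rw [show ev (K := K) d d j = 1 from if_pos hj,
      show M i j = M i ⟨d, by omega⟩ from congrArg (M i) (Fin.ext hj)]
    ring
  · rw [show ev (K := K) d d j = 0 from if_neg hj, colM j hj i]
    ring

end LeonardAux

open LeonardAux

theorem ED_EsZero_EZero_EsD {K : Type*} [Field K] (d : ℕ) (θ θs φ : ℕ → K)
    (hθ : ∀ i ≤ d, ∀ j ≤ d, θ i = θ j → i = j)
    (hθs : ∀ i ≤ d, ∀ j ≤ d, θs i = θs j → i = j)
    (hφ : ∀ i, 1 ≤ i → i ≤ d → φ i ≠ 0)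
    (hE0 : ∀ i ≤ d, ∀ j ≤ d, 1 < |(i : ℤ) - (j : ℤ)| →
      primIdem d θ (matA d θ) i * matAs d θs φ * primIdem d θ (matA d θ) j = 0)
    (hE1 : ∀ i ≤ d, ∀ j ≤ d, |(i : ℤ) - (j : ℤ)| = 1 →
      primIdem d θ (matA d θ) i * matAs d θs φ * primIdem d θ (matA d θ) j ≠ 0)
    (hEs0 : ∀ i ≤ d, ∀ j ≤ d, 1 < |(i : ℤ) - (j : ℤ)| →
      primIdem d θs (matAs d θs φ) i * matA d θ * primIdem d θs (matAs d θs φ) j = 0)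
    (hEs1 : ∀ i ≤ d, ∀ j ≤ d, |(i : ℤ) - (j : ℤ)| = 1 →
      primIdem d θs (matAs d θs φ) i * matA d θ * primIdem d θs (matAs d θs φ) j ≠ 0) :
    primIdem d θ (matA d θ) d * primIdem d θs (matAs d θs φ) 0 * primIdem d θ (matA d θ) 0 * primIdem d θs (matAs d θs φ) d = ((∏ k ∈ Finset.Icc (1) (d), φ k) / ((etaPoly d θ d).eval (θ 0) * (etaPoly d θs d).eval (θs 0))) • (primIdem d θ (matA d θ) d * primIdem d θs (matAs d θs φ) d) := by
  classical
  set A := matA d θ with hA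
  set As := matAs d θs φ with hAs
  set E := primIdem d θ A with hE
  set Es := primIdem d θs As with hEs
  set h : K := (etaPoly d θ d).eval (θ 0) with hh
  set hs : K := (etaPoly d θs d).eval (θs 0) with hhs
  set p : K := ∏ k ∈ Finset.Icc 1 d, φ k with hp
  set ts : K := (tauPoly θs d).eval (θs d) with hts
  -- nonvanishing
  have hne_h : h ≠ 0 := by
    rw [hh, etaPoly, Polynomial.eval_prod]
    apply Finset.prod_ne_zero_iff.mpr
    intro k hk
    simp only [eval_sub, eval_X, eval_C, sub_ne_zero]
    intro hzero
    have h2 := hθ 0 (Nat.zero_le d) (d - k) (by omega) hzero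
    have := mem_range.mp hk
    omega
  have hne_hs : hs ≠ 0 := by
    rw [hhs, etaPoly, Polynomial.eval_prod]
    apply Finset.prod_ne_zero_iff.mpr
    intro k hk
    simp only [eval_sub, eval_X, eval_C, sub_ne_zero]
    intro hzero
    have h2 := hθs 0 (Nat.zero_le d) (d - k) (by omega) hzero
    have := mem_range.mp hk
    omega
  have hne_ts : ts ≠ 0 := by
    rw [hts, tauPoly, Polynomial.eval_prod]
    apply Finset.prod_ne_zero_iff.mpr
    intro k hk
    simp only [eval_sub, eval_X, eval_C, sub_ne_zero]
    intro hzero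
    have h2 := hθs d le_rfl k (by have := mem_range.mp hk; omega) hzero
    have := mem_range.mp hk
    omega
  -- spectral collapse
  have eEta : aeval A (etaPoly d θ d) = h • E 0 := by
    rw [hh, hE, hA]
    apply specCollapse θ (matA d θ) (killA θ) hθ (etaPoly d θ d) 0 (Nat.zero_le d)
    intro i hi hne
    rw [etaPoly, Polynomial.eval_prod]
    apply Finset.prod_eq_zero (i := d - i) (mem_range.mpr (by omega))
    rw [show d - (d - i) = i by omega]
    simp
  have eEtas : aeval As (etaPoly d θs d) = hs • Es 0 := by
    rw [hhs, hEs, hAs]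
    apply specCollapse θs (matAs d θs φ) (killAs θs φ) hθs (etaPoly d θs d) 0 (Nat.zero_le d)
    intro i hi hne
    rw [etaPoly, Polynomial.eval_prod]
    apply Finset.prod_eq_zero (i := d - i) (mem_range.mpr (by omega))
    rw [show d - (d - i) = i by omega]
    simp
  have eTaus : aeval As (tauPoly θs d) = ts • Es d := by
    rw [hts, hEs, hAs]
    apply specCollapse θs (matAs d θs φ) (killAs θs φ) hθs (tauPoly θs d) d le_rfl
    intro i hi hne
    rw [tauPoly, Polynomial.eval_prod]
    apply Finset.prod_eq_zero (i := i) (mem_range.mpr (by omega))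
    simp
  have hfactC := factC (d := d) θ θs φ hθ hE0
  have hkey3 := key3 (d := d) θ θs φ
  rw [← hA, ← hAs, ← hE] at hfactC
  rw [← hA, ← hAs, ← hp] at hkey3
  -- chain
  have c1 : E d * aeval As (etaPoly d θs d) * aeval A (etaPoly d θ d)
      = E d * aeval As (tauPoly θs d) * aeval A (etaPoly d θ d) := by
    calc E d * aeval As (etaPoly d θs d) * aeval A (etaPoly d θ d)
        = h • (E d * aeval As (etaPoly d θs d) * E 0) := by rw [eEta, Matrix.mul_smul]
      _ = h • (E d * aeval As (tauPoly θs d) * E 0) := by rw [hfactC]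
      _ = E d * aeval As (tauPoly θs d) * aeval A (etaPoly d θ d) := by
          rw [eEta, Matrix.mul_smul]
  have c2 : E d * aeval As (etaPoly d θs d) * aeval A (etaPoly d θ d) * aeval As (tauPoly θs d)
      = (p * ts) • (E d * Es d) := by
    rw [c1]
    calc E d * aeval As (tauPoly θs d) * aeval A (etaPoly d θ d) * aeval As (tauPoly θs d)
        = E d * (aeval As (tauPoly θs d) * aeval A (etaPoly d θ d) * aeval As (tauPoly θs d)) := by
          noncomm_ring
      _ = E d * (p • aeval As (tauPoly θs d)) := by rw [hkey3]
      _ = p • (E d * aeval As (tauPoly θs d)) := by rw [Matrix.mul_smul]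
      _ = (p * ts) • (E d * Es d) := by rw [eTaus, Matrix.mul_smul, smul_smul]
  have c3 : (hs * (h * ts)) • (E d * Es 0 * E 0 * Es d) = (p * ts) • (E d * Es d) := by
    rw [← c2, eEtas, eEta, eTaus]
    simp only [Matrix.mul_smul, Matrix.smul_mul, smul_smul]
    congr 1
    ring
  have hinv : (hs * (h * ts)) ≠ 0 := mul_ne_zero hne_hs (mul_ne_zero hne_h hne_ts)
  calc E d * Es 0 * E 0 * Es d
      = (hs * (h * ts))⁻¹ • ((hs * (h * ts)) • (E d * Es 0 * E 0 * Es d)) := by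
        rw [inv_smul_smul₀ hinv]
    _ = (hs * (h * ts))⁻¹ • ((p * ts) • (E d * Es d)) := by rw [c3]
    _ = (p / (h * hs)) • (E d * Es d) := by
        rw [smul_smul]
        congr 1
        field_simp
end
end
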